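/- Theorem 1 (closed-form gradient of the smoothed sum rate with respect to the beamformers): Fix θ ∈ ℂ^M and channels h_{k,g} ∈ ℂ^{1×N}, ĥ_{k,g} ∈ ℂ^{1×M}, H_ts ∈ ℂ^{M×N}, and set z_{k,g} = h_{k,g} + ĥ_{k,g}·diag(θ)·H_ts. Let R_{k,g}(f) = ln(1 + |z_{k,g} f_g|²/(1 + Σ_{ℓ≠g} |z_{k,g} f_ℓ|²)) for f = (f_1,…,f_G) ∈ (ℂ^N)^G and let R̃_sum(f) = −(1/τ)·Σ_{g=1}^{G} ln(Σ_{k=1}^{K_g} exp(−τ·R_{k,g}(f))) with τ > 0. Then R̃_sum is real-differentiable at every f, and for each i ∈ {1,…,G} its conjugate Wirtinger gradient with respect to the block f_i equals [Σ_{k=1}^{K_i} exp(−τ R_{k,i}(f))·∇_{f_i}R_{k,i}] / [Σ_{k=1}^{K_i} exp(−τ R_{k,i}(f))] + Σ_{ℓ≠i} [Σ_{k=1}^{K_ℓ} exp(−τ R_{k,ℓ}(f))·∇_{f_i}R_{k,ℓ}] / [Σ_{k=1}^{K_ℓ} exp(−τ R_{k,ℓ}(f))], where ∇_{f_i}R_{k,i}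 = z_{k,i}ᴴ z_{k,i} f_i / (1 + Σ_{g=1}^{G} |z_{k,i} f_g|²) and, for ℓ ≠ i, ∇_{f_i}R_{k,ℓ} = [ (1 + Σ_{g=1}^{G} |z_{k,ℓ} f_g|²)^{−1} − (1 + Σ_{j≠ℓ} |z_{k,ℓ} f_j|²)^{−1} ]·z_{k,ℓ}ᴴ z_{k,ℓ} f_i. -/

import Mathlib

open Finset

noncomputable section

/-- Row-vector/column-vector product `z·v = ∑ⱼ zⱼ vⱼ`. -/
def cdot {N : ℕ} (z v : Fin N → ℂ) : ℂ := ∑ j, z j * v j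

/-- `g` is the conjugate Wirtinger gradient of `F : ℂⁿ → ℝ` at `x`: `F` is
real-(Fréchet-)differentiable at `x` and the derivative in any direction `h`
equals `2·Re(∑ⱼ conj(gⱼ)·hⱼ)`. -/
def HasWirtingerGradAt {n : ℕ} (F : (Fin n → ℂ) → ℝ) (g : Fin n → ℂ)
    (x : Fin n → ℂ) : Prop :=
  ∃ D : (Fin n → ℂ) →L[ℝ] ℝ, HasFDerivAt F D x ∧
    ∀ h : Fin n → ℂ, D h = 2 * (∑ j, (starRingEnd ℂ) (g j) * h j).re

variable {N M G : ℕ} {Kc : Fin G → ℕ}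

/-- Effective channel `z_{k,g} = h_{k,g} + ĥ_{k,g}·diag(θ)·H_ts`. -/
def zeff (θ : Fin M → ℂ) (h : (g : Fin G) → Fin (Kc g) → Fin N → ℂ)
    (hhat : (g : Fin G) → Fin (Kc g) → Fin M → ℂ) (H : Fin M → Fin N → ℂ)
    (g : Fin G) (k : Fin (Kc g)) : Fin N → ℂ :=
  fun n => h g k n + ∑ m, hhat g k m * θ m * H m n

/-- Achievable rate `R_{k,g}(f) = ln(1 + |z_{k,g}f_g|²/(1 + ∑_{ℓ≠g}|z_{k,g}f_ℓ|²))`. -/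
def rate (θ : Fin M → ℂ) (h : (g : Fin G) → Fin (Kc g) → Fin N → ℂ)
    (hhat : (g : Fin G) → Fin (Kc g) → Fin M → ℂ) (H : Fin M → Fin N → ℂ)
    (f : Fin G → Fin N → ℂ) (g : Fin G) (k : Fin (Kc g)) : ℝ :=
  Real.log (1 + Complex.normSq (cdot (zeff θ h hhat H g k) (f g)) /
    (1 + ∑ ℓ ∈ Finset.univ.erase g, Complex.normSq (cdot (zeff θ h hhat H g k) (f ℓ))))

/-- Smoothed sum rate `R̃_sum(f) = -(1/τ)·∑_g ln(∑_k exp(-τ·R_{k,g}(f)))`. -/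
def smoothedSumRate (τ : ℝ) (θ : Fin M → ℂ)
    (h : (g : Fin G) → Fin (Kc g) → Fin N → ℂ)
    (hhat : (g : Fin G) → Fin (Kc g) → Fin M → ℂ) (H : Fin M → Fin N → ℂ)
    (f : Fin G → Fin N → ℂ) : ℝ :=
  -(1 / τ) * ∑ g, Real.log (∑ k, Real.exp (-τ * rate θ h hhat H f g k))

/-- `∇_{f_i}R_{k,i} = z_{k,i}ᴴ z_{k,i} f_i / (1 + ∑_g |z_{k,i}f_g|²)`. -/
def gradOwn (θ : Fin M → ℂ) (h : (g : Fin G) → Fin (Kc g) → Fin N → ℂ)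
    (hhat : (g : Fin G) → Fin (Kc g) → Fin M → ℂ) (H : Fin M → Fin N → ℂ)
    (f : Fin G → Fin N → ℂ) (i : Fin G) (k : Fin (Kc i)) : Fin N → ℂ :=
  fun j => (starRingEnd ℂ) (zeff θ h hhat H i k j) * cdot (zeff θ h hhat H i k) (f i) /
    (((1 + ∑ g, Complex.normSq (cdot (zeff θ h hhat H i k) (f g)) : ℝ)) : ℂ)

/-- `∇_{f_i}R_{k,ℓ} = [(1+∑_g|z_{k,ℓ}f_g|²)⁻¹ − (1+∑_{j≠ℓ}|z_{k,ℓ}f_j|²)⁻¹]·z_{k,ℓ}ᴴ z_{k,ℓ} f_i`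
for `ℓ ≠ i`. -/
def gradOther (θ : Fin M → ℂ) (h : (g : Fin G) → Fin (Kc g) → Fin N → ℂ)
    (hhat : (g : Fin G) → Fin (Kc g) → Fin M → ℂ) (H : Fin M → Fin N → ℂ)
    (f : Fin G → Fin N → ℂ) (i ℓ : Fin G) (k : Fin (Kc ℓ)) : Fin N → ℂ :=
  fun j =>
    ((((1 + ∑ g, Complex.normSq (cdot (zeff θ h hhat H ℓ k) (f g)))⁻¹
      - (1 + ∑ t ∈ Finset.univ.erase ℓ,
          Complex.normSq (cdot (zeff θ h hhat H ℓ k) (f t)))⁻¹ : ℝ)) : ℂ)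
      * ((starRingEnd ℂ) (zeff θ h hhat H ℓ k j) * cdot (zeff θ h hhat H ℓ k) (f i))

namespace HasWirtingerGradAt

variable {n : ℕ} {F F₁ F₂ : (Fin n → ℂ) → ℝ} {g g' g₁ g₂ x : Fin n → ℂ}

lemma congr_grad (hF : HasWirtingerGradAt F g x) (h : ∀ j, g j = g' j) :
    HasWirtingerGradAt F g' x := (funext h : g = g') ▸ hF

lemma const (c : ℝ) (x : Fin n → ℂ) :
    HasWirtingerGradAt (fun _ => c) (fun _ => 0) x :=
  ⟨0, hasFDerivAt_const c x, by simp⟩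

lemma add (h₁ : HasWirtingerGradAt F₁ g₁ x) (h₂ : HasWirtingerGradAt F₂ g₂ x) :
    HasWirtingerGradAt (fun v => F₁ v + F₂ v) (fun j => g₁ j + g₂ j) x := by
  obtain ⟨D₁, hD₁, hf₁⟩ := h₁
  obtain ⟨D₂, hD₂, hf₂⟩ := h₂
  refine ⟨D₁ + D₂, hD₁.add hD₂, fun v => ?_⟩
  simp only [ContinuousLinearMap.add_apply, hf₁ v, hf₂ v, map_add, add_mul,
    Finset.sum_add_distrib, Complex.add_re]
  ring

lemma sub (h₁ : HasWirtingerGradAt F₁ g₁ x) (h₂ : HasWirtingerGradAt F₂ g₂ x) :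
    HasWirtingerGradAt (fun v => F₁ v - F₂ v) (fun j => g₁ j - g₂ j) x := by
  obtain ⟨D₁, hD₁, hf₁⟩ := h₁
  obtain ⟨D₂, hD₂, hf₂⟩ := h₂
  refine ⟨D₁ - D₂, hD₁.sub hD₂, fun v => ?_⟩
  simp only [ContinuousLinearMap.sub_apply, hf₁ v, hf₂ v, map_sub, sub_mul,
    Finset.sum_sub_distrib, Complex.sub_re]
  ring

lemma const_add (c : ℝ) (h : HasWirtingerGradAt F g x) :
    HasWirtingerGradAt (fun v => c + F v) g x := by
  obtain ⟨D, hD, hf⟩ := h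
  exact ⟨D, hD.const_add c, hf⟩

lemma sub_const (h : HasWirtingerGradAt F g x) (c : ℝ) :
    HasWirtingerGradAt (fun v => F v - c) g x := by
  obtain ⟨D, hD, hf⟩ := h
  exact ⟨D, hD.sub_const c, hf⟩

lemma comp (h : HasWirtingerGradAt F g x) {φ : ℝ → ℝ} {c : ℝ}
    (hφ : HasDerivAt φ c (F x)) :
    HasWirtingerGradAt (fun v => φ (F v)) (fun j => (c : ℂ) * g j) x := by
  obtain ⟨D, hD, hf⟩ := h
  refine ⟨c • D, hφ.comp_hasFDerivAt x hD, fun v => ?_⟩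
  have hsum : ∑ j, (starRingEnd ℂ) ((c : ℂ) * g j) * v j
      = (c : ℂ) * ∑ j, (starRingEnd ℂ) (g j) * v j := by
    rw [Finset.mul_sum]
    refine Finset.sum_congr rfl fun j _ => ?_
    simp [map_mul, Complex.conj_ofReal, mul_assoc]
  simp only [ContinuousLinearMap.coe_smul', Pi.smul_apply, smul_eq_mul, hf v, hsum,
    Complex.re_ofReal_mul]
  ring

lemma const_mul (h : HasWirtingerGradAt F g x) (c : ℝ) :
    HasWirtingerGradAt (fun v => c * F v) (fun j => (c : ℂ) * g j) x := by
  have hc : HasDerivAt (fun t : ℝ => c * t) c (F x) := by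
    simpa using (hasDerivAt_id (F x)).const_mul c
  exact h.comp hc

end HasWirtingerGradAt

lemma hwga_sum {n : ℕ} {ι : Type*} (s : Finset ι) (F : ι → (Fin n → ℂ) → ℝ)
    (g : ι → Fin n → ℂ) (x : Fin n → ℂ)
    (hs : ∀ a ∈ s, HasWirtingerGradAt (F a) (g a) x) :
    HasWirtingerGradAt (fun v => ∑ a ∈ s, F a v) (fun j => ∑ a ∈ s, g a j) x := by
  classical
  revert hs
  induction s using Finset.induction_on with
  | empty => intro _; simpa using HasWirtingerGradAt.const 0 x
  | @insert a s' hna ih =>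
      intro hs
      simp only [Finset.sum_insert hna]
      exact (hs a (Finset.mem_insert_self a s')).add
        (ih fun b hb => hs b (Finset.mem_insert_of_mem hb))

lemma hwga_normSq {n : ℕ} (z x : Fin n → ℂ) :
    HasWirtingerGradAt (fun v => Complex.normSq (cdot z v))
      (fun j => (starRingEnd ℂ) (z j) * cdot z x) x := by
  classical
  set L : (Fin n → ℂ) →L[ℝ] ℂ :=
    ∑ j, z j • (ContinuousLinearMap.proj j : (Fin n → ℂ) →L[ℝ] ℂ) with hLdef
  have hLapp : ∀ v, L v = cdot z v := by
    intro v
    simp [hLdef, cdot, ContinuousLinearMap.sum_apply, smul_eq_mul]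
  have hfunL : (fun v : Fin n → ℂ => cdot z v) = ⇑L := funext fun v => (hLapp v).symm
  have hL : HasFDerivAt (fun v : Fin n → ℂ => cdot z v) L x := by
    rw [hfunL]; exact L.hasFDerivAt
  have hconj : HasFDerivAt (fun v : Fin n → ℂ => (starRingEnd ℂ) (cdot z v))
      ((Complex.conjCLE.toContinuousLinearMap).comp L) x := by
    have := (Complex.conjCLE.toContinuousLinearMap.hasFDerivAt
      (x := cdot z x)).comp x hL
    exact this
  have hmul := hL.mul hconj
  have hre := Complex.reCLM.hasFDerivAt
    (x := cdot z x * (starRingEnd ℂ) (cdot z x)) |>.comp x hmul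
  have hfun2 : (fun v => Complex.reCLM (cdot z v * (starRingEnd ℂ) (cdot z v)))
      = fun v => Complex.normSq (cdot z v) := by
    funext v
    simp [Complex.mul_conj]
  refine ⟨_, by rw [← hfun2]; exact hre, fun v => ?_⟩
  have hs : ∑ j, (starRingEnd ℂ) ((starRingEnd ℂ) (z j) * cdot z x) * v j
      = (starRingEnd ℂ) (cdot z x) * cdot z v := by
    rw [show cdot z v = ∑ j, z j * v j from rfl, Finset.mul_sum]
    refine Finset.sum_congr rfl fun j _ => ?_
    rw [map_mul, Complex.conj_conj]
    ring
  simp only [hs, ContinuousLinearMap.coe_comp', Function.comp_apply,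
    ContinuousLinearMap.add_apply, ContinuousLinearMap.coe_smul', Pi.smul_apply,
    smul_eq_mul, Complex.reCLM_apply, hLapp, ContinuousLinearEquiv.coe_coe,
    Complex.conjCLE_apply]
  simp [Complex.add_re, Complex.mul_re, Complex.conj_re, Complex.conj_im]
  ring

section MainProof

variable {N M G : ℕ} {Kc : Fin G → ℕ}

/-- **Theorem 1: closed-form gradient of the smoothed sum rate w.r.t. the
beamformers (eqn. (A1) with (A2),(A3)).** For every stacked beamformer `f` and
every group index `i`, the smoothed sum rate, as a function of the block `f_i`
(other blocks held fixed), is real-differentiable with conjugate Wirtinger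
gradient given by the stated weighted combination of `∇_{f_i}R_{k,i}` and
`∇_{f_i}R_{k,ℓ}`, `ℓ ≠ i`. -/
theorem smoothedSumRate_wirtinger_grad_wrt_beamformers
    (τ : ℝ) (hτ : 0 < τ) (θ : Fin M → ℂ)
    (h : (g : Fin G) → Fin (Kc g) → Fin N → ℂ)
    (hhat : (g : Fin G) → Fin (Kc g) → Fin M → ℂ) (H : Fin M → Fin N → ℂ) :
    ∀ f : Fin G → Fin N → ℂ, ∀ i : Fin G,
      HasWirtingerGradAt
        (fun v => smoothedSumRate τ θ h hhat H (Function.update f i v))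
        (fun j =>
          (∑ k, ((Real.exp (-τ * rate θ h hhat H f i k) : ℝ) : ℂ) *
              gradOwn θ h hhat H f i k j) /
            (((∑ k, Real.exp (-τ * rate θ h hhat H f i k) : ℝ)) : ℂ)
          + ∑ ℓ ∈ Finset.univ.erase i,
            (∑ k, ((Real.exp (-τ * rate θ h hhat H f ℓ k) : ℝ) : ℂ) *
                gradOther θ h hhat H f i ℓ k j) /
              (((∑ k, Real.exp (-τ * rate θ h hhat H f ℓ k) : ℝ)) : ℂ))
        (f i) := by
  intro f i
  have hupd : Function.update f i (f i) = f := Function.update_eq_self i f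
  -- gradient of each rate w.r.t. own-group beamformer
  have hOwn : ∀ k : Fin (Kc i), HasWirtingerGradAt
      (fun v => rate θ h hhat H (Function.update f i v) i k)
      (gradOwn θ h hhat H f i k) (f i) := by
    intro k
    set z := zeff θ h hhat H i k with hzdef
    set B := ∑ ℓ ∈ Finset.univ.erase i, Complex.normSq (cdot z (f ℓ)) with hBdef
    have hB : (0:ℝ) ≤ B :=
      Finset.sum_nonneg fun _ _ => Complex.normSq_nonneg _
    have hfun : (fun v => rate θ h hhat H (Function.update f i v) i k)
        = fun v => Real.log ((1 + B) + Complex.normSq (cdot z v))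
            - Real.log (1 + B) := by
      funext v
      have hsum : ∑ ℓ ∈ Finset.univ.erase i,
          Complex.normSq (cdot z (Function.update f i v ℓ)) = B := by
        rw [hBdef]
        refine Finset.sum_congr rfl fun ℓ hℓ => ?_
        rw [Function.update_of_ne (Finset.ne_of_mem_erase hℓ)]
      have hA := Complex.normSq_nonneg (cdot z v)
      simp only [rate, ← hzdef]
      rw [Function.update_self, hsum,
        show (1:ℝ) + Complex.normSq (cdot z v) / (1 + B)
            = ((1 + B) + Complex.normSq (cdot z v)) / (1 + B) by
          have h1 : (1:ℝ) + B ≠ 0 := by linarith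
          field_simp,
        Real.log_div (by linarith) (by linarith)]
    rw [hfun]
    have hpos : (0:ℝ) < (1 + B) + Complex.normSq (cdot z (f i)) := by
      have := Complex.normSq_nonneg (cdot z (f i)); linarith
    have h2 := (((hwga_normSq z (f i)).const_add (1 + B)).comp
      (φ := Real.log) (c := ((1 + B) + Complex.normSq (cdot z (f i)))⁻¹)
      (by
        show HasDerivAt Real.log _ ((1 + B) + Complex.normSq (cdot z (f i)))
        exact Real.hasDerivAt_log hpos.ne')).sub_const (Real.log (1 + B))
    refine h2.congr_grad fun j => ?_
    have hkey : (1 + B) + Complex.normSq (cdot z (f i))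
        = 1 + ∑ g, Complex.normSq (cdot z (f g)) := by
      rw [← Finset.add_sum_erase _ _ (Finset.mem_univ i), ← hBdef]
      ring
    simp only [gradOwn, ← hzdef]
    rw [← hkey, Complex.ofReal_inv, div_eq_mul_inv]
    ring
  -- gradient of each rate w.r.t. other-group beamformer
  have hOther : ∀ ℓ : Fin G, ℓ ≠ i → ∀ k : Fin (Kc ℓ), HasWirtingerGradAt
      (fun v => rate θ h hhat H (Function.update f i v) ℓ k)
      (gradOther θ h hhat H f i ℓ k) (f i) := by
    intro ℓ hℓi k
    set z := zeff θ h hhat H ℓ k with hzdef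
    set A := Complex.normSq (cdot z (f ℓ)) with hAdef
    set C := ∑ t ∈ (Finset.univ.erase ℓ).erase i, Complex.normSq (cdot z (f t))
      with hCdef
    have hA : (0:ℝ) ≤ A := Complex.normSq_nonneg _
    have hC : (0:ℝ) ≤ C :=
      Finset.sum_nonneg fun _ _ => Complex.normSq_nonneg _
    have hiℓ : i ∈ Finset.univ.erase ℓ :=
      Finset.mem_erase.mpr ⟨Ne.symm hℓi, Finset.mem_univ i⟩
    have hfun : (fun v => rate θ h hhat H (Function.update f i v) ℓ k)
        = fun v => Real.log (((1 + A) + C) + Complex.normSq (cdot z v))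
            - Real.log ((1 + C) + Complex.normSq (cdot z v)) := by
      funext v
      have hsplit : ∑ t ∈ Finset.univ.erase ℓ,
          Complex.normSq (cdot z (Function.update f i v t))
          = Complex.normSq (cdot z v) + C := by
        rw [← Finset.add_sum_erase _ _ hiℓ, Function.update_self, hCdef]
        congr 1
        refine Finset.sum_congr rfl fun t ht => ?_
        rw [Function.update_of_ne (Finset.ne_of_mem_erase ht)]
      have hD := Complex.normSq_nonneg (cdot z v)
      simp only [rate, ← hzdef]
      rw [Function.update_of_ne hℓi, ← hAdef, hsplit,
        show (1:ℝ) + A / (1 + (Complex.normSq (cdot z v) + C))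
            = (((1 + A) + C) + Complex.normSq (cdot z v))
              / ((1 + C) + Complex.normSq (cdot z v)) by
          have h1 : (1:ℝ) + (Complex.normSq (cdot z v) + C) ≠ 0 := by linarith
          have h2 : ((1:ℝ) + C) + Complex.normSq (cdot z v) ≠ 0 := by linarith
          field_simp
          ring,
        Real.log_div (by linarith) (by linarith)]
    rw [hfun]
    have hD := Complex.normSq_nonneg (cdot z (f i))
    have hp1 : (0:ℝ) < ((1 + A) + C) + Complex.normSq (cdot z (f i)) := by linarith
    have hp2 : (0:ℝ) < (1 + C) + Complex.normSq (cdot z (f i)) := by linarith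
    have h1 := ((hwga_normSq z (f i)).const_add ((1 + A) + C)).comp
      (φ := Real.log) (c := (((1 + A) + C) + Complex.normSq (cdot z (f i)))⁻¹)
      (by
        show HasDerivAt Real.log _ (((1 + A) + C) + Complex.normSq (cdot z (f i)))
        exact Real.hasDerivAt_log hp1.ne')
    have h2 := ((hwga_normSq z (f i)).const_add (1 + C)).comp
      (φ := Real.log) (c := ((1 + C) + Complex.normSq (cdot z (f i)))⁻¹)
      (by
        show HasDerivAt Real.log _ ((1 + C) + Complex.normSq (cdot z (f i)))
        exact Real.hasDerivAt_log hp2.ne')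
    refine (h1.sub h2).congr_grad fun j => ?_
    have hk1 : ((1 + A) + C) + Complex.normSq (cdot z (f i))
        = 1 + ∑ g, Complex.normSq (cdot z (f g)) := by
      rw [← Finset.add_sum_erase _ _ (Finset.mem_univ ℓ), ← hAdef,
        ← Finset.add_sum_erase _ _ hiℓ, ← hCdef]
      ring
    have hk2 : (1 + C) + Complex.normSq (cdot z (f i))
        = 1 + ∑ t ∈ Finset.univ.erase ℓ, Complex.normSq (cdot z (f t)) := by
      rw [← Finset.add_sum_erase _ _ hiℓ, ← hCdef]
      ring
    simp only [gradOther, ← hzdef]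
    rw [← hk1, ← hk2]
    push_cast
    ring
  -- gradient of each per-group log-sum-exp term
  have step2 : ∀ (g : Fin G) (gr : Fin (Kc g) → Fin N → ℂ),
      (∀ k, HasWirtingerGradAt
        (fun v => rate θ h hhat H (Function.update f i v) g k) (gr k) (f i)) →
      HasWirtingerGradAt
        (fun v => Real.log (∑ k, Real.exp (-τ * rate θ h hhat H (Function.update f i v) g k)))
        (fun j => ((-τ : ℝ) : ℂ) *
          ((∑ k, ((Real.exp (-τ * rate θ h hhat H f g k) : ℝ) : ℂ) * gr k j) /
            ((∑ k, Real.exp (-τ * rate θ h hhat H f g k) : ℝ) : ℂ))) (f i) := by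
    intro g gr hgr
    rcases isEmpty_or_nonempty (Fin (Kc g)) with he | hne
    · have h0 : (fun v => Real.log (∑ k, Real.exp (-τ * rate θ h hhat H (Function.update f i v) g k)))
          = fun _ => Real.log 0 := by
        funext v
        rw [Finset.univ_eq_empty, Finset.sum_empty]
      rw [h0]
      refine (HasWirtingerGradAt.const _ _).congr_grad fun j => ?_
      rw [Finset.univ_eq_empty]
      simp
    · have hs₀pos : (0:ℝ) < ∑ k, Real.exp (-τ * rate θ h hhat H f g k) :=
        Finset.sum_pos (fun k _ => Real.exp_pos _) Finset.univ_nonempty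
      have hsum : HasWirtingerGradAt
          (fun v => ∑ k, Real.exp (-τ * rate θ h hhat H (Function.update f i v) g k))
          (fun j => ∑ k, ((-τ * Real.exp (-τ * rate θ h hhat H f g k) : ℝ) : ℂ) * gr k j)
          (f i) := by
        refine hwga_sum _ _ _ _ fun k _ => ?_
        refine (hgr k).comp (φ := fun t => Real.exp (-τ * t))
          (c := -τ * Real.exp (-τ * rate θ h hhat H f g k)) ?_
        show HasDerivAt (fun t : ℝ => Real.exp (-τ * t)) _
          (rate θ h hhat H (Function.update f i (f i)) g k)
        rw [hupd]
        simpa [Function.comp_def, mul_comm] using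
          (Real.hasDerivAt_exp (-τ * rate θ h hhat H f g k)).comp
            (rate θ h hhat H f g k) ((hasDerivAt_id _).const_mul (-τ))
      have hlog := hsum.comp (φ := Real.log)
        (c := (∑ k, Real.exp (-τ * rate θ h hhat H f g k))⁻¹)
        (by
          show HasDerivAt Real.log _
            (∑ k, Real.exp (-τ * rate θ h hhat H (Function.update f i (f i)) g k))
          rw [hupd]
          exact Real.hasDerivAt_log hs₀pos.ne')
      refine hlog.congr_grad fun j => ?_
      have hpull : ∑ k, ((-τ * Real.exp (-τ * rate θ h hhat H f g k) : ℝ) : ℂ) * gr k j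
          = ((-τ : ℝ) : ℂ) * ∑ k, ((Real.exp (-τ * rate θ h hhat H f g k) : ℝ) : ℂ) * gr k j := by
        rw [Finset.mul_sum]
        refine Finset.sum_congr rfl fun k _ => ?_
        push_cast
        ring
      rw [hpull, Complex.ofReal_inv, div_eq_mul_inv]
      ring
  -- assemble
  have hmain : (fun v => smoothedSumRate τ θ h hhat H (Function.update f i v))
      = fun v => -(1/τ) *
          ((Real.log (∑ k, Real.exp (-τ * rate θ h hhat H (Function.update f i v) i k)))
            + ∑ ℓ ∈ Finset.univ.erase i,
              Real.log (∑ k, Real.exp (-τ * rate θ h hhat H (Function.update f i v) ℓ k))) := by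
    funext v
    rw [smoothedSumRate, ← Finset.add_sum_erase _ _ (Finset.mem_univ i)]
  rw [hmain]
  have Hi := step2 i (gradOwn θ h hhat H f i) hOwn
  have Hsum := hwga_sum (Finset.univ.erase i)
    (fun ℓ v => Real.log (∑ k, Real.exp (-τ * rate θ h hhat H (Function.update f i v) ℓ k)))
    (fun ℓ j => ((-τ : ℝ) : ℂ) *
      ((∑ k, ((Real.exp (-τ * rate θ h hhat H f ℓ k) : ℝ) : ℂ) * gradOther θ h hhat H f i ℓ k j) /
        ((∑ k, Real.exp (-τ * rate θ h hhat H f ℓ k) : ℝ) : ℂ))) (f i)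
    (fun ℓ hℓ => step2 ℓ (gradOther θ h hhat H f i ℓ) (hOther ℓ (Finset.ne_of_mem_erase hℓ)))
  have Hfin := (Hi.add Hsum).const_mul (-(1/τ))
  refine Hfin.congr_grad fun j => ?_
  have hτc : ((-(1/τ) : ℝ) : ℂ) * ((-τ : ℝ) : ℂ) = 1 := by
    have hτne : (τ : ℂ) ≠ 0 := by exact_mod_cast hτ.ne'
    push_cast
    field_simp
  rw [mul_add, Finset.mul_sum]
  congr 1
  · rw [← mul_assoc, hτc, one_mul]
  · refine Finset.sum_congr rfl fun ℓ _ => ?_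
    rw [← mul_assoc, hτc, one_mul]
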